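/- arXiv:1306.0986 — 7 statements merged into one kernel-verified Lean document; each statement's English description precedes it below -/
import Mathlib

section
/- Let π be a flow on a locally compact metric space X and let Y ⊆ X be connected. If the limit set ω(Y) = ⋂_{t≥0} cl(Y·[t,∞)) is compact, then ω(Y) is connected. -/
open Set

/-- A nested intersection of nonempty compact closed preconnected sets in a T2 space
is preconnected. -/
lemma nested_iInter_isPreconnected' {X : Type*} [TopologicalSpace X] [T2Space X]
    (C : ℕ → Set X) (hc : ∀ n, IsCompact (C n)) (hcl : ∀ n, IsClosed (C n))
    (hconn : ∀ n, IsPreconnected (C n)) (hne : ∀ n, (C n).Nonempty)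
    (hmono : Antitone C) : IsPreconnected (⋂ n, C n) := by
  intro U V hU hV hSUV ⟨a, haS, haU⟩ ⟨b, hbS, hbV⟩
  by_contra hemp
  rw [not_nonempty_iff_eq_empty] at hemp
  set S := ⋂ n, C n with hSdef
  have hScl : IsClosed S := isClosed_iInter hcl
  have hScpt : IsCompact S := (hc 0).of_isClosed_subset hScl (iInter_subset _ 0)
  -- the two pieces
  have hAeq : S ∩ U = S \ V := by
    apply Subset.antisymm
    · rintro x ⟨hxS, hxU⟩
      refine ⟨hxS, fun hxV => ?_⟩
      have : x ∈ S ∩ (U ∩ V) := ⟨hxS, hxU, hxV⟩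
      rw [hemp] at this; exact this
    · rintro x ⟨hxS, hxV⟩
      rcases hSUV hxS with h | h
      · exact ⟨hxS, h⟩
      · exact absurd h hxV
  have hBeq : S ∩ V = S \ U := by
    apply Subset.antisymm
    · rintro x ⟨hxS, hxV⟩
      refine ⟨hxS, fun hxU => ?_⟩
      have : x ∈ S ∩ (U ∩ V) := ⟨hxS, hxU, hxV⟩
      rw [hemp] at this; exact this
    · rintro x ⟨hxS, hxU⟩
      rcases hSUV hxS with h | h
      · exact absurd h hxU
      · exact ⟨hxS, h⟩
  have hAcpt : IsCompact (S ∩ U) := by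
    rw [hAeq]; exact hScpt.diff hV
  have hBcpt : IsCompact (S ∩ V) := by
    rw [hBeq]; exact hScpt.diff hU
  have hdisj : Disjoint (S ∩ U) (S ∩ V) := by
    rw [disjoint_iff_inter_eq_empty, ← hemp]
    ext x; constructor
    · rintro ⟨⟨hxS, hxU⟩, _, hxV⟩; exact ⟨hxS, hxU, hxV⟩
    · rintro ⟨hxS, hxU, hxV⟩; exact ⟨⟨hxS, hxU⟩, hxS, hxV⟩
  obtain ⟨U', V', hU', hV', hAU', hBV', hUV'⟩ :=
    SeparatedNhds.of_isCompact_isCompact hAcpt hBcpt hdisj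
  -- some C n is contained in U' ∪ V'
  have hsub : S ⊆ U' ∪ V' := fun x hx => by
    rcases hSUV hx with h | h
    · exact Or.inl (hAU' ⟨hx, h⟩)
    · exact Or.inr (hBV' ⟨hx, h⟩)
  have hexn : ∃ n, C n ⊆ U' ∪ V' := by
    by_contra hno
    push_neg at hno
    have hn : ∀ n, (C n ∩ (U' ∪ V')ᶜ).Nonempty := by
      intro n
      obtain ⟨x, hx1, hx2⟩ := not_subset.1 (hno n)
      exact ⟨x, hx1, hx2⟩
    have := IsCompact.nonempty_iInter_of_sequence_nonempty_isCompact_isClosed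
      (fun n => C n ∩ (U' ∪ V')ᶜ)
      (fun n => inter_subset_inter_left _ (hmono (Nat.le_succ n))) hn
      ((hc 0).inter_right ((hU'.union hV').isClosed_compl))
      (fun n => (hcl n).inter (hU'.union hV').isClosed_compl)
    obtain ⟨x, hx⟩ := this
    rw [← iInter_inter] at hx
    exact hx.2 (hsub hx.1)
  obtain ⟨n, hn⟩ := hexn
  have h1 : (C n ∩ U').Nonempty := ⟨a, iInter_subset _ n haS, hAU' ⟨haS, haU⟩⟩
  have h2 : (C n ∩ V').Nonempty := ⟨b, iInter_subset _ n hbS, hBV' ⟨hbS, hbV⟩⟩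
  obtain ⟨x, _, hx⟩ := hconn n U' V' hU' hV' hn h1 h2
  exact (hUV'.le_bot hx).elim

/-- **Connectedness of the limit set.**
Let `π` be a flow on a locally compact metric space `X` and `Y ⊆ X` a connected
subset.  If the limit set `ω(Y) = ⋂_{t ≥ 0} cl(Y·[t,∞))` is compact, then it is
connected. -/
theorem omegaLimit_of_connected_isConnected {X : Type*} [MetricSpace X]
    [LocallyCompactSpace X]
    (π : X → ℝ → X) (hcont : Continuous fun p : X × ℝ => π p.1 p.2)
    (h0 : ∀ x, π x 0 = x) (hadd : ∀ x t s, π (π x t) s = π x (t + s))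
    (Y : Set X) (hY : IsConnected Y)
    (hcpt : IsCompact (⋂ t ∈ Ici (0 : ℝ), closure (image2 π Y (Ici t)))) :
    IsPreconnected (⋂ t ∈ Ici (0 : ℝ), closure (image2 π Y (Ici t))) := by
  set A : ℝ → Set X := fun t => image2 π Y (Ici t) with hA
  set ω : Set X := ⋂ t ∈ Ici (0 : ℝ), closure (A t) with hω
  have hAmono : ∀ {s t : ℝ}, s ≤ t → A t ⊆ A s := fun {s t} hst =>
    image2_subset subset_rfl (Ici_subset_Ici.2 hst)
  have hAconn : ∀ t : ℝ, IsConnected (A t) := fun t => by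
    show IsConnected (image2 π Y (Ici t))
    rw [← image_prod]
    exact (hY.prod ⟨⟨t, self_mem_Ici⟩, isPreconnected_Ici⟩).image _ hcont.continuousOn
  have hωsub : ∀ t : ℝ, 0 ≤ t → ω ⊆ closure (A t) := fun t ht =>
    biInter_subset_of_mem ht
  rcases eq_empty_or_nonempty ω with hωe | ⟨x, hx⟩
  · rw [hωe]; exact isPreconnected_empty
  -- ω is nonempty; take a compact superset K with ω ⊆ interior K
  obtain ⟨K, hKc, hKint⟩ := exists_compact_superset hcpt
  -- each tail A t (t ≥ 0) meets interior K
  have hmeet : ∀ t : ℝ, 0 ≤ t → (A t ∩ interior K).Nonempty := by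
    intro t ht
    have hx' : x ∈ closure (A t) := hωsub t ht hx
    rcases mem_closure_iff.1 hx' (interior K) isOpen_interior (hKint hx) with ⟨y, hy1, hy2⟩
    exact ⟨y, hy2, hy1⟩
  by_cases hcase : ∃ T : ℝ, 0 ≤ T ∧ A T ⊆ K
  · -- eventually inside the compact set K
    obtain ⟨T, hT0, hTK⟩ := hcase
    have hωeq : ω = ⋂ n : ℕ, closure (A (T + n)) := by
      apply Subset.antisymm
      · exact subset_iInter fun n => hωsub (T + n) (by positivity)
      · refine subset_iInter₂ fun t ht => ?_
        obtain ⟨n, hn⟩ := exists_nat_ge t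
        refine (iInter_subset _ n).trans (closure_mono (hAmono ?_))
        exact hn.trans (by linarith [Nat.cast_nonneg (α := ℝ) n])
    have hsubK : ∀ n : ℕ, closure (A (T + n)) ⊆ K := fun n =>
      closure_minimal ((hAmono (le_add_of_nonneg_right (Nat.cast_nonneg n))).trans hTK) hKc.isClosed
    rw [hωeq]
    apply nested_iInter_isPreconnected' _
      (fun n => hKc.of_isClosed_subset isClosed_closure (hsubK n))
      (fun n => isClosed_closure)
      (fun n => (hAconn (T + n)).isPreconnected.closure)
      (fun n => ((hAconn (T + n)).nonempty).closure)
    exact antitone_nat_of_succ_le fun n =>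
      closure_mono (hAmono (by push_cast; linarith))
  · -- otherwise every tail meets the frontier of K, contradicting ω ⊆ interior K
    exfalso
    push_neg at hcase
    have hfr : ∀ t : ℝ, 0 ≤ t → (A t ∩ frontier K).Nonempty := by
      intro t ht
      by_contra hno
      rw [not_nonempty_iff_eq_empty] at hno
      obtain ⟨z, hz1, hz2⟩ := not_subset.1 (hcase t ht)
      have hcover : A t ⊆ interior K ∪ (closure K)ᶜ := by
        intro y hy
        by_cases h1 : y ∈ interior K
        · exact Or.inl h1
        · refine Or.inr fun h2 => ?_
          have : y ∈ A t ∩ frontier K := ⟨hy, h2, h1⟩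
          rw [hno] at this; exact this
      have h2 : (A t ∩ (closure K)ᶜ).Nonempty := by
        refine ⟨z, hz1, fun h => hz2 ?_⟩
        rwa [hKc.isClosed.closure_eq] at h
      obtain ⟨y, _, hy1, hy2⟩ := (hAconn t).isPreconnected _ _ isOpen_interior
        isClosed_closure.isOpen_compl hcover ((hmeet t ht).imp fun y hy => ⟨hy.1, hy.2⟩) h2
      exact hy2 (subset_closure (interior_subset hy1))
    -- frontier K is compact
    have hfrcpt : IsCompact (frontier K) :=
      hKc.of_isClosed_subset isClosed_frontier hKc.isClosed.frontier_subset
    have hn : ∀ n : ℕ, (closure (A n) ∩ frontier K).Nonempty := fun n =>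
      ((hfr n (Nat.cast_nonneg n)).imp fun y hy => ⟨subset_closure hy.1, hy.2⟩)
    have := IsCompact.nonempty_iInter_of_sequence_nonempty_isCompact_isClosed
      (fun n : ℕ => closure (A n) ∩ frontier K)
      (fun n => inter_subset_inter_left _ (closure_mono (hAmono (by push_cast; linarith))))
      hn (hfrcpt.inter_left isClosed_closure)
      (fun n => isClosed_closure.inter isClosed_frontier)
    obtain ⟨y, hy⟩ := this
    rw [← iInter_inter] at hy
    have hyω : y ∈ ω := by
      refine mem_iInter₂.2 fun t ht => ?_
      obtain ⟨n, hn'⟩ := exists_nat_ge t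
      exact closure_mono (hAmono hn') (mem_iInter.1 hy.1 n)
    have : y ∈ interior K := hKint hyω
    exact hy.2.2 this
end

section
/- Let X be a locally compact metric space and let {Aₙ}_{n≥1} be a sequence of closed, connected subsets of X with A₁ ⊇ A₂ ⊇ ⋯ such that ⋂_{n=1}^∞ Aₙ is a nonempty compact subset of X. Then for every neighborhood U of ⋂_{n=1}^∞ Aₙ there exists a natural number n with Aₙ ⊆ U. -/
open Set Filter Topology

lemma aux_inter_frontier {X : Type*} [TopologicalSpace X] {s V : Set X}
    (hs : IsPreconnected s) (hV : IsOpen V) (h1 : (s ∩ V).Nonempty)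
    (h2 : (s ∩ Vᶜ).Nonempty) : (s ∩ frontier V).Nonempty := by
  by_contra h
  rw [Set.not_nonempty_iff_eq_empty] at h
  have hfr : frontier V = closure V \ V := hV.frontier_eq
  have hcover : s ⊆ V ∪ (closure V)ᶜ := by
    intro x hx
    by_cases hxV : x ∈ V
    · exact Or.inl hxV
    · right
      intro hxc
      have : x ∈ s ∩ frontier V := ⟨hx, by rw [hfr]; exact ⟨hxc, hxV⟩⟩
      simp [h] at this
  have h2' : (s ∩ (closure V)ᶜ).Nonempty := by
    obtain ⟨x, hxs, hxV⟩ := h2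
    refine ⟨x, hxs, fun hxc => ?_⟩
    have : x ∈ s ∩ frontier V := ⟨hxs, by rw [hfr]; exact ⟨hxc, hxV⟩⟩
    simp [h] at this
  obtain ⟨x, hxs, hxV, hxc⟩ := hs V (closure V)ᶜ hV isClosed_closure.isOpen_compl
    hcover h1 h2'
  exact hxc (subset_closure hxV)

/-- **Nested closed connected sets lemma.**
Let `X` be a locally compact metric space and `Aₙ` a decreasing sequence of
closed, connected subsets of `X` whose intersection `⋂ₙ Aₙ` is a nonempty
compact set.  Then every neighborhood `U` of `⋂ₙ Aₙ` contains some `Aₙ`. -/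
theorem nested_closed_connected_subset_of_nhds {X : Type*} [MetricSpace X]
    [LocallyCompactSpace X] (A : ℕ → Set X)
    (hclosed : ∀ n, IsClosed (A n)) (hconn : ∀ n, IsConnected (A n))
    (hanti : ∀ n, A (n + 1) ⊆ A n)
    (hne : (⋂ n, A n).Nonempty) (hcpt : IsCompact (⋂ n, A n)) :
    ∀ U ∈ 𝓝ˢ (⋂ n, A n), ∃ n, A n ⊆ U := by
  intro U hU
  by_contra hcon
  push_neg at hcon
  obtain ⟨O, hO, hKO, hOU⟩ := mem_nhdsSet_iff_exists.mp hU
  obtain ⟨L, hL, hKL, hLO⟩ := exists_compact_between hcpt hO hKO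
  set V : Set X := interior L with hVdef
  have hVopen : IsOpen V := isOpen_interior
  have hFL : frontier V ⊆ L := by
    calc frontier V ⊆ closure V := frontier_subset_closure
    _ ⊆ closure L := closure_mono interior_subset
    _ = L := hL.isClosed.closure_eq
  have hFcl : IsClosed (frontier V) := isClosed_frontier
  have hFcpt : IsCompact (frontier V) := hL.of_isClosed_subset hFcl hFL
  -- each A n meets frontier V
  have hmem : ∀ n, (A n ∩ frontier V).Nonempty := by
    intro n
    have hKA : (⋂ m, A m) ⊆ A n := iInter_subset A n
    obtain ⟨x, hx⟩ := hne
    have h1 : (A n ∩ V).Nonempty := ⟨x, hKA hx, hKL hx⟩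
    have h2 : (A n ∩ Vᶜ).Nonempty := by
      obtain ⟨y, hy⟩ := Set.not_subset.mp (hcon n)
      exact ⟨y, hy.1, fun hyV => hy.2 (hOU (hLO (interior_subset hyV)))⟩
    exact aux_inter_frontier (hconn n).isPreconnected hVopen h1 h2
  have hempty : (⋂ n, A n ∩ frontier V).Nonempty := by
    apply IsCompact.nonempty_iInter_of_sequence_nonempty_isCompact_isClosed
    · intro i
      exact inter_subset_inter_left _ (hanti i)
    · exact hmem
    · exact hFcpt.of_isClosed_subset ((hclosed 0).inter hFcl) inter_subset_right
    · exact fun i => (hclosed i).inter hFcl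
  rw [← iInter_inter] at hempty
  obtain ⟨x, hxK, hxF⟩ := hempty
  have hxV : x ∈ V := hKL hxK
  rw [hVopen.frontier_eq] at hxF
  exact hxF.2 hxV
end

section
/- Let π be a flow on a locally compact metric space X and let M be a compact subset of X. Then Ω(M) = ⋂_{ε>0, t>0} P_t(M,ε), where Ω(M) = ⋃_{x∈M} Ω(x). -/
open Set Filter Topology

/-- An `(ε,t)`-chain from `x` to `y` for the flow `π`: a pair of finite
sequences `x = x₁, x₂, …, xₙ, x_{n+1} = y` in `X` and `t₁, …, tₙ` in `ℝ⁺`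
(with `n ≥ 1`) such that `tᵢ ≥ t` and `d(xᵢ·tᵢ, x_{i+1}) ≤ ε` for all `i`. -/
def IsEpsTChain {X : Type*} [MetricSpace X] (π : X → ℝ → X) (ε t : ℝ) (x y : X) : Prop :=
  ∃ n : ℕ, ∃ c : Fin (n + 2) → X, ∃ τ : Fin (n + 1) → ℝ,
    c 0 = x ∧ c (Fin.last (n + 1)) = y ∧
    ∀ i : Fin (n + 1), t ≤ τ i ∧ dist (π (c i.castSucc) (τ i)) (c i.succ) ≤ ε

/-- The `Ω`-limit set of `x`: all `y` such that for every `ε > 0` and `t > 0`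
there is an `(ε,t)`-chain from `x` to `y`. -/
def OmegaChain {X : Type*} [MetricSpace X] (π : X → ℝ → X) (x : X) : Set X :=
  {y | ∀ ε > (0 : ℝ), ∀ t > (0 : ℝ), IsEpsTChain π ε t x y}

/-- `P_t(M,ε)`: the set of endpoints of `(ε,t)`-chains starting in `M`. -/
def chainReach {X : Type*} [MetricSpace X] (π : X → ℝ → X) (t : ℝ) (M : Set X) (ε : ℝ) : Set X :=
  {y | ∃ x ∈ M, IsEpsTChain π ε t x y}

/-- **Lemma (chain representation of `Ω(M)`).**
For a flow `π` on a locally compact metric space `X` and a compact subset `M`,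
`Ω(M) = ⋂_{ε,t > 0} P_t(M,ε)`, where `Ω(M) = ⋃_{x ∈ M} Ω(x)`. -/
theorem omega_eq_iInter_PSet {X : Type*} [MetricSpace X] [LocallyCompactSpace X]
    (π : X → ℝ → X) (hcont : Continuous fun p : X × ℝ => π p.1 p.2)
    (h0 : ∀ x, π x 0 = x) (hadd : ∀ x t s, π (π x t) s = π x (t + s))
    (M : Set X) (hM : IsCompact M) :
    (⋃ x ∈ M, OmegaChain π x) = ⋂ ε > (0 : ℝ), ⋂ t > (0 : ℝ), chainReach π t M ε := by
  ext y
  simp only [mem_iUnion, mem_iInter, OmegaChain, chainReach, mem_setOf_eq]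
  constructor
  · rintro ⟨x, hx, hchain⟩ ε hε t ht
    exact ⟨x, hx, hchain ε hε t ht⟩
  · intro hy
    choose u hu hch using fun n : ℕ =>
      hy (1 / ((n : ℝ) + 1)) (by positivity) ((n : ℝ) + 1) (by positivity)
    obtain ⟨x, hxM, φ, hφ, hlim⟩ := hM.tendsto_subseq hu
    refine ⟨x, hxM, ?_⟩
    intro ε hε t ht
    have hc : Continuous fun z => π z t := hcont.comp (continuous_id.prodMk continuous_const)
    obtain ⟨δ, hδ, hδ'⟩ := Metric.continuous_iff.mp hc x ε hε
    obtain ⟨N₁, hN₁⟩ := Metric.tendsto_atTop.mp hlim δ hδ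
    obtain ⟨N₂, hN₂⟩ := exists_nat_one_div_lt hε
    set K := max N₁ (max N₂ ⌈2 * t⌉₊) with hK
    set n := φ K with hn
    have hKn : K ≤ n := hφ.le_apply
    have hdxn : dist (u n) x < δ := hN₁ K (le_max_left _ _)
    have hεn : 1 / ((n : ℝ) + 1) ≤ ε := by
      have h1 : (N₂ : ℝ) + 1 ≤ (n : ℝ) + 1 := by
        have : N₂ ≤ n := le_trans (le_trans (le_max_left _ _) (le_max_right _ _)) hKn
        exact_mod_cast Nat.succ_le_succ this
      calc 1 / ((n : ℝ) + 1) ≤ 1 / ((N₂ : ℝ) + 1) := by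
            apply one_div_le_one_div_of_le (by positivity) h1
        _ ≤ ε := hN₂.le
    have h2t : 2 * t ≤ (n : ℝ) + 1 := by
      have h1 : (⌈2 * t⌉₊ : ℝ) ≤ n := by
        exact_mod_cast le_trans (le_trans (le_max_right _ _) (le_max_right _ _)) hKn
      calc 2 * t ≤ (⌈2 * t⌉₊ : ℝ) := Nat.le_ceil _
        _ ≤ (n : ℝ) + 1 := by linarith
    obtain ⟨m, c, τ, hc0, hclast, hstep⟩ := hch n
    refine ⟨m + 1, Fin.cases x (Function.update c 0 (π (u n) t)),
      Fin.cases t (Function.update τ 0 (τ 0 - t)), by simp, ?_, ?_⟩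
    · rw [show Fin.last (m + 1 + 1) = (Fin.last (m + 1)).succ from (Fin.succ_last _).symm]
      simp only [Fin.cases_succ]
      rw [Function.update_of_ne (by simp [Fin.ext_iff])]
      exact hclast
    · intro i
      induction i using Fin.cases with
      | zero =>
        refine ⟨by simp, ?_⟩
        simp only [Fin.castSucc_zero, Fin.cases_zero, Fin.cases_succ, Function.update_self]
        rw [dist_comm]
        exact (hδ' (u n) hdxn).le
      | succ j =>
        simp only [← Fin.succ_castSucc, Fin.cases_succ]
        rw [Function.update_of_ne (Fin.succ_ne_zero j)]
        by_cases hj : j = 0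
        · subst hj
          rw [Function.update_self, Fin.castSucc_zero, Function.update_self]
          have h := hstep 0
          refine ⟨by linarith [h.1], ?_⟩
          rw [hadd]
          have : t + (τ 0 - t) = τ 0 := by ring
          rw [this]
          calc dist (π (u n) (τ 0)) (c (Fin.succ 0)) = dist (π (c 0) (τ 0)) (c (Fin.succ 0)) := by
                rw [hc0]
            _ ≤ 1 / ((n : ℝ) + 1) := h.2
            _ ≤ ε := hεn
        · rw [Function.update_of_ne hj, Function.update_of_ne (by simpa using hj)]
          have h := hstep j
          exact ⟨by linarith [h.1], le_trans h.2 hεn⟩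
end

section
/- Let π be a flow on a locally compact metric space X and let M be a compact subset of X. For ε, t > 0 set A_{ε,t} = cl(P_t(M,ε)·[t,∞)). Then ⋂_{ε>0, t>0} P_t(M,ε) = ⋂_{ε>0, t>0} A_{ε,t}. -/
open Set Filter Topology

/-- Extending a chain by one step. -/
lemma IsEpsTChain.snoc {X : Type*} [MetricSpace X] {π : X → ℝ → X} {ε t : ℝ} {x y z : X}
    (h : IsEpsTChain π ε t x y) {s : ℝ} (hs : t ≤ s) (hd : dist (π y s) z ≤ ε) :
    IsEpsTChain π ε t x z := by
  obtain ⟨n, c, τ, hc0, hclast, hstep⟩ := h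
  refine ⟨n + 1, Fin.snoc c z, Fin.snoc τ s, ?_, ?_, ?_⟩
  · have : (0 : Fin (n + 3)) = Fin.castSucc 0 := rfl
    rw [this, Fin.snoc_castSucc, hc0]
  · simp [Fin.snoc_last]
  · intro i
    refine Fin.lastCases ?_ ?_ i
    · have h1 : (Fin.last (n + 1)).castSucc = Fin.castSucc (Fin.last (n + 1)) := rfl
      have h2 : (Fin.last (n + 1)).succ = Fin.last (n + 2) := by
        ext; simp
      rw [h2]
      simp only [Fin.snoc_last, Fin.snoc_castSucc, hclast]
      exact ⟨hs, hd⟩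
    · intro j
      have h2 : (Fin.castSucc j).succ = Fin.castSucc j.succ := by
        ext; simp
      rw [h2]
      simp only [Fin.snoc_castSucc]
      exact hstep j

/-- **Lemma.** For a flow `π` on a locally compact metric space `X` and a
compact subset `M`, setting `A_{ε,t} = cl(P_t(M,ε)·[t,∞))`, one has
`⋂_{ε,t > 0} P_t(M,ε) = ⋂_{ε,t > 0} A_{ε,t}`. -/
theorem iInter_chainReach_eq_iInter_closure {X : Type*} [MetricSpace X]
    [LocallyCompactSpace X]
    (π : X → ℝ → X) (hcont : Continuous fun p : X × ℝ => π p.1 p.2)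
    (h0 : ∀ x, π x 0 = x) (hadd : ∀ x t s, π (π x t) s = π x (t + s))
    (M : Set X) (hM : IsCompact M) :
    (⋂ ε > (0 : ℝ), ⋂ t > (0 : ℝ), chainReach π t M ε) =
      ⋂ ε > (0 : ℝ), ⋂ t > (0 : ℝ), closure (image2 π (chainReach π t M ε) (Ici t)) := by
  ext y
  simp only [mem_iInter]
  constructor
  · intro hy ε hε t ht
    rw [Metric.mem_closure_iff]
    intro δ hδ
    set ε' := min ε (δ / 2) with hε'def
    have hε'pos : 0 < ε' := lt_min hε (by linarith)
    obtain ⟨x, hxM, n, c, τ, hc0, hclast, hstep⟩ := hy ε' hε'pos (2 * t) (by linarith)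
    set cn := c (Fin.last n).castSucc with hcn
    set τn := τ (Fin.last n) with hτn
    have hτn2t : 2 * t ≤ τn := (hstep (Fin.last n)).1
    -- the modified chain ending at w = π cn (τn - t)
    have hw : π cn (τn - t) ∈ chainReach π t M ε := by
      refine ⟨x, hxM, n, Function.update c (Fin.last (n + 1)) (π cn (τn - t)),
        Function.update τ (Fin.last n) (τn - t), ?_, ?_, ?_⟩
      · rw [Function.update_of_ne, hc0]
        intro h
        have := congrArg Fin.val h
        simp at this
      · rw [Function.update_self]
      · intro i
        by_cases hi : i = Fin.last n
        · subst hi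
          rw [Function.update_self]
          constructor
          · linarith
          · have h1 : (Fin.last n).castSucc ≠ Fin.last (n + 1) := by
              intro h
              have := congrArg Fin.val h
              simp at this
            have h2 : (Fin.last n).succ = Fin.last (n + 1) := by
              ext; simp
            rw [Function.update_of_ne h1, h2, Function.update_self, ← hcn]
            simp only [dist_self]
            linarith
        · rw [Function.update_of_ne hi]
          have hival : (i : ℕ) < n := by
            rcases lt_or_eq_of_le (Nat.lt_succ_iff.1 i.isLt) with h | h
            · exact h
            · exact absurd (Fin.ext h : i = Fin.last n) hi
          have h1 : i.castSucc ≠ Fin.last (n + 1) := by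
            intro h
            have := congrArg Fin.val h
            simp [Fin.val_last] at this
            omega
          have h2 : i.succ ≠ Fin.last (n + 1) := by
            intro h
            have := congrArg Fin.val h
            simp [Fin.val_last] at this
            omega
          rw [Function.update_of_ne h1, Function.update_of_ne h2]
          refine ⟨by linarith [(hstep i).1], le_trans (hstep i).2 (min_le_left _ _)⟩
    refine ⟨π (π cn (τn - t)) t, mem_image2_of_mem hw self_mem_Ici, ?_⟩
    have heq : π (π cn (τn - t)) t = π cn τn := by
      rw [hadd]; ring_nf
    rw [heq]
    have hlast : dist (π cn τn) y < δ := by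
      have h2 : (Fin.last n).succ = Fin.last (n + 1) := by ext; simp
      have := (hstep (Fin.last n)).2
      rw [h2, hclast] at this
      calc dist (π cn τn) y ≤ ε' := this
        _ ≤ δ / 2 := min_le_right _ _
        _ < δ := by linarith
    rw [dist_comm]
    exact hlast
  · intro hy ε hε t ht
    have h := hy ε hε t ht
    rw [Metric.mem_closure_iff] at h
    obtain ⟨z, hz, hdz⟩ := h ε hε
    obtain ⟨w, hw, s, hs, rfl⟩ := hz
    obtain ⟨x, hxM, hchain⟩ := hw
    exact ⟨x, hxM, hchain.snoc hs (by rw [dist_comm] at hdz; linarith)⟩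
end

section
/- Let π be a flow on a locally compact metric space X. If pₙ → p, qₙ → q, and qₙ ∈ Ω(pₙ) for all n, then q ∈ Ω(p). Equivalently, the chain relation R = {(x,y) : for all ε > 0 and t > 0 there is an (ε,t)-chain from x to y} is a closed subset of X × X. -/
open Set Filter Topology

/-- A single-link chain. -/
lemma chain_single {X : Type*} [MetricSpace X] (π : X → ℝ → X) {ε t τ : ℝ} {x y : X}
    (hτ : t ≤ τ) (hd : dist (π x τ) y ≤ ε) : IsEpsTChain π ε t x y := by
  refine ⟨0, ![x, y], ![τ], rfl, rfl, ?_⟩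
  intro i
  fin_cases i
  simpa using ⟨hτ, hd⟩

/-- Chains concatenate. -/
lemma chain_trans {X : Type*} [MetricSpace X] (π : X → ℝ → X) {ε t : ℝ} {x y z : X}
    (h1 : IsEpsTChain π ε t x y) (h2 : IsEpsTChain π ε t y z) :
    IsEpsTChain π ε t x z := by
  obtain ⟨n1, c1, τ1, hc10, hc1l, hl1⟩ := h1
  obtain ⟨n2, c2, τ2, hc20, hc2l, hl2⟩ := h2
  refine ⟨n1 + n2 + 1,
    fun i => if h : i.val ≤ n1 then c1 ⟨i.val, by omega⟩ else c2 ⟨i.val - (n1 + 1), by omega⟩,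
    fun i => if h : i.val ≤ n1 then τ1 ⟨i.val, by omega⟩ else τ2 ⟨i.val - (n1 + 1), by omega⟩,
    ?_, ?_, ?_⟩
  · simpa using hc10
  · have hcond : ¬ ((Fin.last (n1 + n2 + 1 + 1)).val ≤ n1) := by
      rw [Fin.val_last]; omega
    simp only [dif_neg hcond]
    rw [← hc2l]
    congr 1
    simp [Fin.ext_iff, Fin.last]
    omega
  · intro i
    by_cases h : i.val ≤ n1
    · have hcs : (i.castSucc).val ≤ n1 := by simpa using h
      have hτ := hl1 ⟨i.val, by omega⟩
      refine ⟨?_, ?_⟩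
      · simpa only [dif_pos h] using hτ.1
      · by_cases h2' : (i.succ).val ≤ n1
        · simp only [dif_pos hcs, dif_pos h2', dif_pos h]
          have := hτ.2
          convert this using 3 <;> congr 1 <;> simp [Fin.ext_iff] <;> omega
        · -- junction: i.val = n1
          have hiv : i.val = n1 := by simp at h2' ⊢; omega
          simp only [dif_pos hcs, dif_neg h2', dif_pos h]
          have e0 : c2 ⟨(i.succ).val - (n1 + 1), by omega⟩ = c1 (⟨i.val, by omega⟩ : Fin (n1 + 1)).succ := by
            rw [show (⟨(i.succ).val - (n1 + 1), by omega⟩ : Fin (n2 + 2)) = 0 from by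
              simp [Fin.ext_iff]; omega, hc20, ← hc1l]
            congr 1
            simp [Fin.ext_iff, Fin.last] <;> omega
          rw [e0]
          have := hτ.2
          convert this using 3 <;> congr 1 <;> simp [Fin.ext_iff] <;> omega
    · have hcs : ¬ (i.castSucc).val ≤ n1 := by simpa using h
      have hss : ¬ (i.succ).val ≤ n1 := by simp; omega
      have hτ := hl2 ⟨i.val - (n1 + 1), by omega⟩
      refine ⟨?_, ?_⟩
      · simpa only [dif_neg h] using hτ.1
      · simp only [dif_neg hcs, dif_neg hss, dif_neg h]
        have := hτ.2
        convert this using 3 <;> congr 1 <;> simp [Fin.ext_iff] <;> omega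

/-- **Lemma (the chain relation is closed).**
For a flow `π` on a locally compact metric space `X`, if `pₙ → p`, `qₙ → q`
and `qₙ ∈ Ω(pₙ)` for all `n`, then `q ∈ Ω(p)`. -/
theorem omegaChain_closed {X : Type*} [MetricSpace X] [LocallyCompactSpace X]
    (π : X → ℝ → X) (hcont : Continuous fun p : X × ℝ => π p.1 p.2)
    (h0 : ∀ x, π x 0 = x) (hadd : ∀ x t s, π (π x t) s = π x (t + s))
    (p q : ℕ → X) (P Q : X)
    (hp : Tendsto p atTop (𝓝 P)) (hq : Tendsto q atTop (𝓝 Q))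
    (hmem : ∀ n, q n ∈ OmegaChain π (p n)) :
    Q ∈ OmegaChain π P := by
  intro ε hε t ht
  have hg : Continuous fun x : X => π x t := hcont.comp (continuous_id.prodMk continuous_const)
  obtain ⟨δ, hδ, hδP⟩ := Metric.continuousAt_iff.mp hg.continuousAt (ε / 2) (by positivity)
  obtain ⟨N1, hN1⟩ := Metric.tendsto_atTop.mp hp δ hδ
  obtain ⟨N2, hN2⟩ := Metric.tendsto_atTop.mp hq (ε / 2) (by positivity)
  set N := max N1 N2 with hN
  have hpN : dist (p N) P < δ := hN1 N (le_max_left _ _)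
  have hqN : dist (q N) Q < ε / 2 := hN2 N (le_max_right _ _)
  obtain ⟨n, c, τ, hc0, hcl, hlink⟩ := hmem N (ε / 2) (by positivity) (2 * t) (by positivity)
  refine chain_trans π (y := π (p N) t) ?_ ?_
  · -- single link from P to π (p N) t
    refine chain_single π le_rfl ?_
    have := hδP hpN
    rw [dist_comm] at this
    linarith
  · -- modified chain from π (p N) t to Q
    refine ⟨n, fun i => if i = 0 then π (p N) t else if i = Fin.last (n + 1) then Q else c i,
      fun i => if i = 0 then τ 0 - t else τ i, by simp, ?_, ?_⟩
    · have h1 : (Fin.last (n + 1) : Fin (n + 2)) ≠ 0 := by simp [Fin.ext_iff]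
      simp [h1]
    · intro i
      beta_reduce
      have hτ0 := (hlink 0).1
      have hτi := (hlink i).1
      constructor
      · by_cases h : i = 0
        · subst h; simp; linarith
        · rw [if_neg h]; linarith
      · have key : π (if i.castSucc = 0 then π (p N) t
            else if i.castSucc = Fin.last (n + 1) then Q else c i.castSucc)
            (if i = 0 then τ 0 - t else τ i) = π (c i.castSucc) (τ i) := by
          by_cases h : i = 0
          · subst h
            simp only [Fin.castSucc_zero, if_pos rfl, if_true]
            rw [hadd, hc0]
            congr 1
            ring
          · have h1 : i.castSucc ≠ 0 := by
              exact fun hc => h (Fin.castSucc_injective _ (by rw [hc, Fin.castSucc_zero]))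
            have h2 : i.castSucc ≠ Fin.last (n + 1) := by
              simp [Fin.ext_iff]; omega
            rw [if_neg h1, if_neg h2, if_neg h]
        rw [key]
        have hsne : i.succ ≠ 0 := Fin.succ_ne_zero i
        rw [if_neg hsne]
        by_cases h : i.succ = Fin.last (n + 1)
        · rw [if_pos h]
          have : c i.succ = q N := by rw [h, hcl]
          calc dist (π (c i.castSucc) (τ i)) Q
              ≤ dist (π (c i.castSucc) (τ i)) (c i.succ) + dist (c i.succ) Q := dist_triangle _ _ _
            _ ≤ ε / 2 + ε / 2 := by
                refine add_le_add (hlink i).2 ?_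
                rw [this]
                linarith
            _ = ε := by ring
        · rw [if_neg h]
          linarith [(hlink i).2]
end

section
/- Let π be a flow on a locally compact metric space X and let M be a compact subset of X. Then Ω(M) = ⋃_{x∈M} Ω(x) is a quasi-attracting set, i.e., Ω(M) is a closed set equal to an intersection of attracting sets. -/
open Set Filter Topology

/-- The limit set of a subset `Y`: `ω(Y) = ⋂_{t ≥ 0} cl(Y·[t,∞))`. -/
def omegaSet {X : Type*} [MetricSpace X] (π : X → ℝ → X) (Y : Set X) : Set X :=
  ⋂ t ∈ Ici (0 : ℝ), closure (image2 π Y (Ici t))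

/-- A set `A` is positively invariant if `A·ℝ⁺ = A`. -/
def PosInvariant {X : Type*} [MetricSpace X] (π : X → ℝ → X) (A : Set X) : Prop :=
  image2 π A (Ici (0 : ℝ)) = A

/-- An attracting set: a positively invariant closed set `A` admitting a
neighborhood `U` with `ω(U) ⊆ A`. -/
def IsAttracting {X : Type*} [MetricSpace X] (π : X → ℝ → X) (A : Set X) : Prop :=
  PosInvariant π A ∧ IsClosed A ∧ ∃ U ∈ 𝓝ˢ A, omegaSet π U ⊆ A

/-- A quasi-attracting set: a closed set which is an intersection of
attracting sets. -/
def IsQuasiAttracting {X : Type*} [MetricSpace X] (π : X → ℝ → X) (A : Set X) : Prop :=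
  IsClosed A ∧ ∃ 𝒜 : Set (Set X), (∀ B ∈ 𝒜, IsAttracting π B) ∧ A = ⋂₀ 𝒜


section Aux

variable {X : Type*} [MetricSpace X] (π : X → ℝ → X)

lemma chain_mono {ε ε' t t' : ℝ} {x y : X} (h : IsEpsTChain π ε t x y)
    (hε : ε ≤ ε') (ht : t' ≤ t) : IsEpsTChain π ε' t' x y := by
  obtain ⟨n, c, τ, h0, h1, h2⟩ := h
  exact ⟨n, c, τ, h0, h1, fun i => ⟨ht.trans (h2 i).1, (h2 i).2.trans hε⟩⟩

lemma chain_extend {ε t s : ℝ} {x w z : X} (h : IsEpsTChain π ε t x w)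
    (hs : t ≤ s) (hd : dist (π w s) z ≤ ε) : IsEpsTChain π ε t x z := by
  obtain ⟨n, c, τ, h0, h1, h2⟩ := h
  refine ⟨n + 1, Fin.snoc c z, Fin.snoc τ s, ?_, ?_, ?_⟩
  · rw [← Fin.castSucc_zero, Fin.snoc_castSucc, h0]
  · exact Fin.snoc_last _ _
  · intro i
    induction i using Fin.lastCases with
    | last =>
      constructor
      · rw [Fin.snoc_last]; exact hs
      · simp only [Fin.snoc_castSucc, Fin.succ_last, Fin.snoc_last, h1]
        exact hd
    | cast j =>
      rw [Fin.snoc_castSucc, Fin.succ_castSucc, Fin.snoc_castSucc, Fin.snoc_castSucc]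
      exact h2 j

lemma chain_shift (hadd : ∀ x t s, π (π x t) s = π x (t + s))
    {ε ε' t r : ℝ} {x w y : X}
    (h : IsEpsTChain π ε' t x w) (hε : ε' ≤ ε) (hr : 0 ≤ r)
    (hd : ∀ p : X, dist p w ≤ ε' → dist (π p r) y ≤ ε) :
    IsEpsTChain π ε t x y := by
  obtain ⟨n, c, τ, h0, h1, h2⟩ := h
  refine ⟨n, Function.update c (Fin.last (n + 1)) y,
    Function.update τ (Fin.last n) (τ (Fin.last n) + r), ?_, ?_, ?_⟩
  · rw [Function.update_of_ne (Fin.ne_of_lt Fin.last_pos), h0]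
  · rw [Function.update_self]
  · intro i
    induction i using Fin.lastCases with
    | last =>
      rw [Function.update_self]
      constructor
      · linarith [(h2 (Fin.last n)).1]
      · rw [Function.update_of_ne (Fin.castSucc_lt_last _).ne,
          Fin.succ_last, Function.update_self, ← hadd]
        apply hd
        have := (h2 (Fin.last n)).2
        rwa [Fin.succ_last, h1] at this
    | cast j =>
      rw [Function.update_of_ne (Fin.castSucc_lt_last _).ne,
        Function.update_of_ne (Fin.castSucc_lt_last _).ne,
        Fin.succ_castSucc,
        Function.update_of_ne (Fin.castSucc_lt_last _).ne]
      exact ⟨(h2 j.castSucc).1, (h2 j.castSucc).2.trans hε⟩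

lemma chain_prepend (hadd : ∀ x t s, π (π x t) s = π x (t + s))
    {ε ε' t t' : ℝ} {x x' y : X}
    (h : IsEpsTChain π ε' t' x' y) (hε : ε' ≤ ε) (ht : 0 < t) (ht' : 2 * t ≤ t')
    (hd : dist (π x t) (π x' t) ≤ ε) : IsEpsTChain π ε t x y := by
  obtain ⟨n, c, τ, h0, h1, h2⟩ := h
  refine ⟨n + 1, Fin.cons x (Function.update c 0 (π x' t)),
    Fin.cons t (Function.update τ 0 (τ 0 - t)), ?_, ?_, ?_⟩
  · rw [Fin.cons_zero]
  · rw [show (Fin.last (n + 2)) = (Fin.last (n + 1)).succ from (Fin.succ_last _).symm,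
      Fin.cons_succ, Function.update_of_ne (Fin.ne_of_gt Fin.last_pos), h1]
  · intro i
    induction i using Fin.cases with
    | zero =>
      rw [Fin.cons_zero, Fin.castSucc_zero, Fin.cons_zero, Fin.succ_zero_eq_one,
        show (1 : Fin (n + 3)) = (0 : Fin (n+2)).succ from rfl, Fin.cons_succ,
        Function.update_self]
      exact ⟨le_refl t, hd⟩
    | succ j =>
      rw [Fin.cons_succ, ← Fin.succ_castSucc, Fin.cons_succ, Fin.cons_succ]
      rcases eq_or_ne j 0 with rfl | hj
      · rw [Fin.castSucc_zero, Function.update_self, Function.update_self,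
          Function.update_of_ne (Fin.succ_ne_zero 0), hadd]
        have e : t + (τ 0 - t) = τ 0 := by ring
        rw [e]
        refine ⟨by linarith [(h2 0).1], ?_⟩
        have := (h2 0).2
        rw [Fin.castSucc_zero, h0] at this
        exact this.trans hε
      · rw [Function.update_of_ne hj,
          Function.update_of_ne (Fin.castSucc_ne_zero_iff.mpr hj),
          Function.update_of_ne (Fin.succ_ne_zero j)]
        refine ⟨by linarith [(h2 j).1], (h2 j).2.trans hε⟩

lemma reach_extend {ε t s : ℝ} {M : Set X} {w z : X} (h : w ∈ chainReach π t M ε)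
    (hs : t ≤ s) (hd : dist (π w s) z ≤ ε) : z ∈ chainReach π t M ε := by
  obtain ⟨x, hx, hc⟩ := h
  exact ⟨x, hx, chain_extend π hc hs hd⟩

lemma attracting_closure (hcont : Continuous fun p : X × ℝ => π p.1 p.2)
    (h0 : ∀ x, π x 0 = x) (hadd : ∀ x t s, π (π x t) s = π x (t + s))
    {ε t : ℝ} (hε : 0 < ε) (ht : 0 < t) (M : Set X) :
    IsAttracting π (closure (image2 π (chainReach π t M ε) (Ici 0))) := by
  have hc1 : ∀ s : ℝ, Continuous fun z => π z s := fun s =>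
    hcont.comp (continuous_id.prodMk continuous_const)
  set P := chainReach π t M ε with hP
  set S := image2 π P (Ici (0:ℝ)) with hS
  set Q := image2 π P (Ici t) with hQ
  -- robustness
  have hrob : ∀ z : X, (∃ q ∈ Q, dist (π z t) q < ε) → π z t ∈ P := by
    rintro z ⟨q, ⟨w, hw, s, hs, rfl⟩, hdq⟩
    exact reach_extend π hw hs (by rw [dist_comm] at hdq; exact hdq.le)
  have hSA : ∀ s : ℝ, 0 ≤ s → MapsTo (fun z => π z s) S S := by
    rintro s hs _ ⟨w, hw, r, hr, rfl⟩
    exact ⟨w, hw, r + s, add_nonneg hr hs, (hadd w r s).symm⟩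
  refine ⟨?_, isClosed_closure, ?_⟩
  · apply Subset.antisymm
    · rintro _ ⟨a, ha, s, hs, rfl⟩
      exact ((hSA s hs).closure (hc1 s)) ha
    · intro a ha
      exact ⟨a, ha, 0, mem_Ici.mpr (le_refl 0), h0 a⟩
  · refine ⟨(fun z => π z t) ⁻¹' (⋃ q ∈ Q, Metric.ball q ε), ?_, ?_⟩
    · refine (IsOpen.mem_nhdsSet ((isOpen_iUnion fun q => isOpen_iUnion fun _ =>
        Metric.isOpen_ball).preimage (hc1 t))).mpr ?_
      intro a ha
      have hmap : MapsTo (fun z => π z t) S Q := by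
        rintro _ ⟨w, hw, r, hr, rfl⟩
        refine ⟨w, hw, r + t, ?_, (hadd w r t).symm⟩
        simp only [mem_Ici] at hr ⊢
        linarith
      have : π a t ∈ closure Q := (hmap.closure (hc1 t)) ha
      rw [Metric.mem_closure_iff] at this
      obtain ⟨q, hq, hd⟩ := this ε hε
      exact mem_preimage.mpr (mem_iUnion₂.mpr ⟨q, hq, by rwa [Metric.mem_ball]⟩)
    · intro z hz
      have h1 : z ∈ closure (image2 π ((fun z => π z t) ⁻¹' (⋃ q ∈ Q, Metric.ball q ε)) (Ici t)) := by
        have := mem_iInter₂.mp hz t (le_of_lt ht)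
        exact this
      refine closure_mono ?_ h1
      rintro _ ⟨u, hu, s, hs, rfl⟩
      have hut : π u t ∈ P := by
        apply hrob
        obtain ⟨q, hq, hd⟩ := mem_iUnion₂.mp (mem_preimage.mp hu)
        exact ⟨q, hq, by rwa [Metric.mem_ball] at hd⟩
      refine ⟨π u t, hut, s - t, by simp only [mem_Ici] at hs ⊢; linarith, ?_⟩
      rw [hadd]; congr 1; ring

lemma claimC [LocallyCompactSpace X]
    (hcont : Continuous fun p : X × ℝ => π p.1 p.2)
    (h0 : ∀ x, π x 0 = x) (hadd : ∀ x t s, π (π x t) s = π x (t + s))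
    (M : Set X) {y : X}
    (hy : ∀ ε > (0:ℝ), ∀ t > (0:ℝ), y ∈ closure (image2 π (chainReach π t M ε) (Ici 0)))
    {ε t : ℝ} (hε : 0 < ε) (ht : 0 < t) : y ∈ chainReach π t M ε := by
  -- the compact tube of backward flow from y
  set L : Set X := (fun r => π y (-r)) '' Icc 0 t with hL
  have hLc : IsCompact L :=
    (isCompact_Icc).image ((hcont.comp (continuous_const.prodMk (continuous_neg))))
  have hyL : y ∈ L := ⟨0, ⟨le_refl 0, ht.le⟩, by simp [h0]⟩
  obtain ⟨K, hKc, hLK⟩ := exists_compact_superset hLc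
  obtain ⟨η, hη, hthick⟩ := hLc.exists_thickening_subset_open isOpen_interior hLK
  have hthickK : Metric.thickening η L ⊆ K := hthick.trans interior_subset
  -- uniform continuity on K × [-t, t]
  have UCa : ∀ α > (0:ℝ), ∃ β > (0:ℝ), ∀ z₁ ∈ K, ∀ z₂ ∈ K, ∀ r ∈ Icc (-t) t,
      dist z₁ z₂ < β → dist (π z₁ r) (π z₂ r) < α := by
    intro α hα
    have huc : UniformContinuousOn (fun p : X × ℝ => π p.1 p.2) (K ×ˢ Icc (-t) t) :=
      (hKc.prod isCompact_Icc).uniformContinuousOn_of_continuous hcont.continuousOn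
    rw [Metric.uniformContinuousOn_iff] at huc
    obtain ⟨β, hβ, hb⟩ := huc α hα
    refine ⟨β, hβ, fun z₁ h₁ z₂ h₂ r hr hd => ?_⟩
    have := hb (z₁, r) ⟨h₁, hr⟩ (z₂, r) ⟨h₂, hr⟩ ?_
    · exact this
    · rw [Prod.dist_eq]
      simp only [dist_self]
      rw [max_eq_left dist_nonneg]
      exact hd
  obtain ⟨β₂, hβ₂, hB₂⟩ := UCa (ε/2) (by linarith)
  obtain ⟨β₁, hβ₁, hB₁⟩ := UCa (η/4) (by linarith)
  set ε' : ℝ := min ε (min (η/4) (β₂/2)) with hε'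
  have hε'pos : 0 < ε' := lt_min hε (lt_min (by linarith) (by linarith))
  have hε'ε : ε' ≤ ε := min_le_left _ _
  have hε'η : ε' ≤ η/4 := le_trans (min_le_right _ _) (min_le_left _ _)
  have hε'β₂ : ε' ≤ β₂/2 := le_trans (min_le_right _ _) (min_le_right _ _)
  set δ : ℝ := min (min (ε/2) η) β₁ with hδdef
  have hδpos : 0 < δ := lt_min (lt_min (by linarith) hη) hβ₁
  have hδε2 : δ ≤ ε/2 := (min_le_left _ _).trans (min_le_left _ _)
  have hδη : δ ≤ η := (min_le_left _ _).trans (min_le_right _ _)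
  have hδβ₁ : δ ≤ β₁ := min_le_right _ _
  have hy' := hy ε' hε'pos t ht
  rw [Metric.mem_closure_iff] at hy'
  obtain ⟨b, hb, hdb⟩ := hy' δ hδpos
  obtain ⟨w, hw, r, hr, rfl⟩ := hb
  rw [mem_Ici] at hr
  obtain ⟨x, hxM, hchain⟩ := hw
  rw [dist_comm] at hdb
  rcases le_or_gt t r with hrt | hrt
  · -- easy case : r ≥ t, just append one more chain step
    exact ⟨x, hxM, chain_extend π (chain_mono π hchain hε'ε le_rfl) hrt (by linarith)⟩
  · -- hard case : 0 ≤ r < t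
    have hrIcc : r ∈ Icc (-t) t := ⟨by linarith, hrt.le⟩
    have hnegr : -r ∈ Icc (-t) t := ⟨by linarith, by linarith⟩
    have hyK : y ∈ K := hthickK (Metric.self_subset_thickening hη _ hyL)
    have huK : π w r ∈ K :=
      hthickK (Metric.mem_thickening_iff.mpr ⟨y, hyL, lt_of_lt_of_le hdb hδη⟩)
    have hwu : π (π w r) (-r) = w := by
      rw [hadd w r (-r), show r + -r = 0 by ring, h0]
    have hyrL : π y (-r) ∈ L := ⟨r, ⟨hr, hrt.le⟩, rfl⟩
    have hwL : dist w (π y (-r)) < η/4 := by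
      have := hB₁ (π w r) huK y hyK (-r) hnegr (lt_of_lt_of_le hdb hδβ₁)
      rwa [hwu] at this
    have hwK : w ∈ K :=
      hthickK (Metric.mem_thickening_iff.mpr ⟨π y (-r), hyrL, by linarith⟩)
    refine ⟨x, hxM, chain_shift π hadd hchain hε'ε hr ?_⟩
    intro p hpw
    have hpK : p ∈ K := by
      refine hthickK (Metric.mem_thickening_iff.mpr ⟨π y (-r), hyrL, ?_⟩)
      have h1 : dist p (π y (-r)) ≤ dist p w + dist w (π y (-r)) := dist_triangle _ _ _
      linarith
    have h2 : dist (π p r) (π w r) < ε/2 :=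
      hB₂ p hpK w hwK r hrIcc (lt_of_le_of_lt hpw (by linarith))
    have h3 : dist (π p r) y ≤ dist (π p r) (π w r) + dist (π w r) y := dist_triangle _ _ _
    linarith

lemma exists_source (hcont : Continuous fun p : X × ℝ => π p.1 p.2)
    (hadd : ∀ x t s, π (π x t) s = π x (t + s))
    {M : Set X} (hM : IsCompact M) {y : X}
    (hC : ∀ ε > (0:ℝ), ∀ t > (0:ℝ), y ∈ chainReach π t M ε) :
    ∃ x ∈ M, y ∈ OmegaChain π x := by
  have hc1 : ∀ s : ℝ, Continuous fun z => π z s := fun s =>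
    hcont.comp (continuous_id.prodMk continuous_const)
  set N : ℕ → Set X := fun n => {x ∈ M | IsEpsTChain π (1/(n+1)) (n+1) x y} with hN
  set Kc : ℕ → Set X := fun n => closure (N n) with hKc
  have hKM : ∀ n, Kc n ⊆ M := fun n =>
    (closure_mono (fun x hx => hx.1)).trans (hM.isClosed.closure_subset_iff.mpr le_rfl)
  have hKne : ∀ n, (Kc n).Nonempty := by
    intro n
    obtain ⟨x, hx, hch⟩ := hC (1/(n+1)) (by positivity) (n+1) (by positivity)
    exact ⟨x, subset_closure ⟨hx, hch⟩⟩
  have hKdec : ∀ n, Kc (n + 1) ⊆ Kc n := by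
    intro n
    apply closure_mono
    rintro x ⟨hx, hch⟩
    refine ⟨hx, chain_mono π hch ?_ ?_⟩
    · apply one_div_le_one_div_of_le (by positivity)
      push_cast; linarith
    · push_cast; linarith
  have hKcl : ∀ n, IsClosed (Kc n) := fun n => isClosed_closure
  have hKcomp : IsCompact (Kc 0) := hM.of_isClosed_subset (hKcl 0) (hKM 0)
  obtain ⟨x, hx⟩ := IsCompact.nonempty_iInter_of_sequence_nonempty_isCompact_isClosed
    Kc hKdec hKne hKcomp hKcl
  rw [mem_iInter] at hx
  refine ⟨x, hKM 0 (hx 0), ?_⟩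
  intro ε hε t ht
  obtain ⟨n, hn⟩ := exists_nat_gt (max (1/ε) (2*t))
  have hn1 : 1/ε < (n:ℝ) + 1 := lt_of_le_of_lt (le_max_left _ _) (hn.trans (lt_add_one _))
  have hn2 : 2*t ≤ (n:ℝ) + 1 := (lt_of_le_of_lt (le_max_right _ _) (hn.trans (lt_add_one _))).le
  clear hn
  have hεn : 1/((n:ℝ)+1) ≤ ε := by
    rw [div_le_iff₀ (by positivity)]
    rw [div_lt_iff₀ hε] at hn1
    nlinarith
  -- continuity of z ↦ π z t at x
  have hcx : ∃ δ > (0:ℝ), ∀ x', dist x' x < δ → dist (π x' t) (π x t) < ε := by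
    have := Metric.continuous_iff.mp (hc1 t) x ε hε
    exact this
  obtain ⟨δ, hδ, hδc⟩ := hcx
  have := hx n
  rw [hKc] at this
  rw [Metric.mem_closure_iff] at this
  obtain ⟨x', hx', hdxx'⟩ := this δ hδ
  refine chain_prepend π hadd hx'.2 hεn ht hn2 ?_
  rw [dist_comm] at hdxx'
  exact (dist_comm (π x t) (π x' t) ▸ (hδc x' hdxx').le)

end Aux

/-- **Theorem.** For a flow `π` on a locally compact metric space `X` and a
compact subset `M`, the set `Ω(M) = ⋃_{x ∈ M} Ω(x)` is quasi-attracting. -/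
theorem omegaChain_isQuasiAttracting {X : Type*} [MetricSpace X]
    [LocallyCompactSpace X]
    (π : X → ℝ → X) (hcont : Continuous fun p : X × ℝ => π p.1 p.2)
    (h0 : ∀ x, π x 0 = x) (hadd : ∀ x t s, π (π x t) s = π x (t + s))
    (M : Set X) (hM : IsCompact M) :
    IsQuasiAttracting π (⋃ x ∈ M, OmegaChain π x) := by
  set 𝒜 : Set (Set X) := {A | ∃ ε > (0:ℝ), ∃ t > (0:ℝ),
    A = closure (image2 π (chainReach π t M ε) (Ici 0))} with h𝒜
  have hatt : ∀ B ∈ 𝒜, IsAttracting π B := by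
    rintro B ⟨ε, hε, t, ht, rfl⟩
    exact attracting_closure π hcont h0 hadd hε ht M
  have hEq : (⋃ x ∈ M, OmegaChain π x) = ⋂₀ 𝒜 := by
    apply Subset.antisymm
    · intro y hy
      simp only [mem_iUnion] at hy
      obtain ⟨x, hxM, hyx⟩ := hy
      intro B hB
      obtain ⟨ε, hε, t, ht, rfl⟩ := hB
      exact subset_closure ⟨y, ⟨x, hxM, hyx ε hε t ht⟩, 0, mem_Ici.mpr (le_refl 0), h0 y⟩
    · intro y hy
      have hy' : ∀ ε > (0:ℝ), ∀ t > (0:ℝ),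
          y ∈ closure (image2 π (chainReach π t M ε) (Ici 0)) :=
        fun ε hε t ht => hy _ ⟨ε, hε, t, ht, rfl⟩
      have hC : ∀ ε > (0:ℝ), ∀ t > (0:ℝ), y ∈ chainReach π t M ε :=
        fun ε hε t ht => claimC π hcont h0 hadd M hy' hε ht
      obtain ⟨x, hxM, hyx⟩ := exists_source π hcont hadd hM hC
      exact mem_iUnion₂.mpr ⟨x, hxM, hyx⟩
  constructor
  · rw [hEq]
    exact isClosed_sInter fun B hB => (hatt B hB).2.1
  · exact ⟨𝒜, hatt, hEq⟩
end

section
/- Let π be a flow on a locally compact metric space X and let M be a compact subset of X. Then Ω(M) = ⋃_{x∈M} Ω(x) is a closed subset of X. -/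
open Set Filter Topology

/-- Perturbing the endpoint of a chain. -/
lemma chain_endpoint_perturb {X : Type*} [MetricSpace X] (π : X → ℝ → X) {ε ε' t : ℝ}
    {x y y' : X} (h : IsEpsTChain π ε t x y) (hy : dist y y' ≤ ε') :
    IsEpsTChain π (ε + ε') t x y' := by
  obtain ⟨n, c, τ, hc0, hcl, hs⟩ := h
  have hε' : 0 ≤ ε' := le_trans dist_nonneg hy
  refine ⟨n, Function.update c (Fin.last (n + 1)) y', τ, ?_, ?_, ?_⟩
  · rw [Function.update_of_ne (by simp [Fin.ext_iff]) _ _]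
    exact hc0
  · simp
  · intro i
    refine ⟨(hs i).1, ?_⟩
    have h1 : Function.update c (Fin.last (n + 1)) y' i.castSucc = c i.castSucc := by
      rw [Function.update_of_ne (Fin.ne_of_lt (Fin.castSucc_lt_last i))]
    rw [h1]
    have h2 : dist (c i.succ) (Function.update c (Fin.last (n + 1)) y' i.succ) ≤ ε' := by
      by_cases hi : i.succ = Fin.last (n + 1)
      · rw [hi, Function.update_self, ← hi]
        rw [hi, hcl]
        exact hy
      · rw [Function.update_of_ne hi]
        simpa using hε'
    calc dist (π (c i.castSucc) (τ i)) (Function.update c (Fin.last (n + 1)) y' i.succ)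
        ≤ dist (π (c i.castSucc) (τ i)) (c i.succ)
          + dist (c i.succ) (Function.update c (Fin.last (n + 1)) y' i.succ) :=
          dist_triangle _ _ _
      _ ≤ ε + ε' := add_le_add (hs i).2 h2

/-- Shifting the starting point of a chain forward by time `t`. -/
lemma chain_shift_s8 {X : Type*} [MetricSpace X] (π : X → ℝ → X)
    (hadd : ∀ x t s, π (π x t) s = π x (t + s)) {ε t : ℝ} (ht : 0 ≤ t) {x y : X}
    (h : IsEpsTChain π ε (2 * t) x y) : IsEpsTChain π ε t (π x t) y := by
  obtain ⟨n, c, τ, hc0, hcl, hs⟩ := h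
  refine ⟨n, Function.update c 0 (π x t), Function.update τ 0 (τ 0 - t), ?_, ?_, ?_⟩
  · simp
  · rw [Function.update_of_ne (by simp [Fin.ext_iff])]
    exact hcl
  · intro i
    by_cases hi : i = 0
    · subst hi
      constructor
      · rw [Function.update_self]
        have := (hs 0).1
        linarith
      · have e1 : (0 : Fin (n + 1)).castSucc = 0 := rfl
        rw [e1, Function.update_self, Function.update_self,
          Function.update_of_ne (Fin.succ_ne_zero 0), hadd]
        have e2 : t + (τ 0 - t) = τ 0 := by ring
        rw [e2]
        have h3 := (hs 0).2
        rw [show Fin.castSucc (0 : Fin (n + 1)) = 0 from rfl, hc0] at h3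
        exact h3
    · have e1 : Function.update τ 0 (τ 0 - t) i = τ i := Function.update_of_ne hi _ _
      have e2 : Function.update c 0 (π x t) i.castSucc = c i.castSucc := by
        rw [Function.update_of_ne (by simpa [Fin.castSucc_eq_zero_iff] using hi)]
      have e3 : Function.update c 0 (π x t) i.succ = c i.succ := by
        rw [Function.update_of_ne (Fin.succ_ne_zero i)]
      rw [e1, e2, e3]
      exact ⟨le_trans (by linarith) (hs i).1, (hs i).2⟩

/-- Prepending a step to a chain. -/
lemma chain_cons {X : Type*} [MetricSpace X] (π : X → ℝ → X) {ε t s : ℝ} (hst : t ≤ s)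
    {x z y : X} (hd : dist (π x s) z ≤ ε) (h : IsEpsTChain π ε t z y) :
    IsEpsTChain π ε t x y := by
  obtain ⟨n, c, τ, hc0, hcl, hs⟩ := h
  refine ⟨n + 1, Fin.cons x c, Fin.cons s τ, rfl, ?_, ?_⟩
  · rw [show (Fin.last (n + 1 + 1)) = (Fin.last (n + 1)).succ from rfl, Fin.cons_succ]
    exact hcl
  · intro i
    induction i using Fin.cases with
    | zero =>
      refine ⟨by simpa using hst, ?_⟩
      have e1 : (Fin.cons x c : Fin (n + 3) → X) (Fin.castSucc 0) = x := rfl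
      have e2 : (Fin.cons x c : Fin (n + 3) → X) ((0 : Fin (n + 2)).succ) = c 0 := by
        rw [show ((0 : Fin (n + 2)).succ) = Fin.succ (0 : Fin (n + 2)) from rfl, Fin.cons_succ]
      rw [e1, e2, hc0]
      simpa using hd
    | succ j =>
      have e1 : (Fin.cons s τ : Fin (n + 2) → ℝ) j.succ = τ j := Fin.cons_succ _ _ _
      have e2 : (Fin.cons x c : Fin (n + 3) → X) (Fin.castSucc j.succ) = c (Fin.castSucc j) := by
        rw [← Fin.succ_castSucc, Fin.cons_succ]
      have e3 : (Fin.cons x c : Fin (n + 3) → X) j.succ.succ = c j.succ := Fin.cons_succ _ _ _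
      rw [e1, e2, e3]
      exact hs j

/-- **Theorem.** For a flow `π` on a locally compact metric space `X` and a
compact subset `M`, the set `Ω(M) = ⋃_{x ∈ M} Ω(x)` is closed. -/
theorem omegaChain_isClosed {X : Type*} [MetricSpace X] [LocallyCompactSpace X]
    (π : X → ℝ → X) (hcont : Continuous fun p : X × ℝ => π p.1 p.2)
    (h0 : ∀ x, π x 0 = x) (hadd : ∀ x t s, π (π x t) s = π x (t + s))
    (M : Set X) (hM : IsCompact M) :
    IsClosed (⋃ x ∈ M, OmegaChain π x) := by
  apply isClosed_of_closure_subset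
  intro y hy
  obtain ⟨u, hu, hul⟩ := mem_closure_iff_seq_limit.mp hy
  have hu' : ∀ n, ∃ x, x ∈ M ∧ u n ∈ OmegaChain π x := by
    intro n
    simpa [mem_iUnion] using hu n
  choose xs hxsM hxsΩ using hu'
  obtain ⟨x, hxM, φ, hφ, hlim⟩ := hM.tendsto_subseq hxsM
  refine mem_iUnion₂.mpr ⟨x, hxM, ?_⟩
  intro ε hε t ht
  -- continuity: π (xs (φ k)) t → π x t
  have hc : Tendsto (fun k => π (xs (φ k)) t) atTop (𝓝 (π x t)) := by
    have hp : Tendsto (fun k => ((xs (φ k) : X), t)) atTop (𝓝 (x, t)) :=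
      hlim.prodMk_nhds tendsto_const_nhds
    exact (hcont.tendsto (x, t)).comp hp
  have h1 : ∀ᶠ k in atTop, dist (π x t) (π (xs (φ k)) t) ≤ ε := by
    filter_upwards [Metric.tendsto_nhds.mp hc ε hε] with k hk
    rw [dist_comm]
    exact hk.le
  have h2 : ∀ᶠ k in atTop, dist (u (φ k)) y ≤ ε / 2 := by
    have : Tendsto (fun k => u (φ k)) atTop (𝓝 y) := hul.comp hφ.tendsto_atTop
    filter_upwards [Metric.tendsto_nhds.mp this (ε / 2) (by linarith)] with k hk
    exact hk.le
  obtain ⟨k, hk1, hk2⟩ := (h1.and h2).exists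
  -- get an (ε/2, 2t)-chain from xs (φ k) to u (φ k)
  have C1 : IsEpsTChain π (ε / 2) (2 * t) (xs (φ k)) (u (φ k)) :=
    hxsΩ (φ k) (ε / 2) (by linarith) (2 * t) (by linarith)
  -- perturb endpoint to y
  have C2 : IsEpsTChain π ε (2 * t) (xs (φ k)) y := by
    have := chain_endpoint_perturb π C1 hk2
    rwa [add_halves] at this
  -- shift the starting point
  have C3 : IsEpsTChain π ε t (π (xs (φ k)) t) y := chain_shift_s8 π hadd ht.le C2
  -- prepend the step from x
  exact chain_cons π le_rfl hk1 C3
end
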